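/- arXiv:2204.02003 — 3 statements merged into one kernel-verified Lean document; each statement's English description precedes it below -/
import Mathlib

section
/- Ordinal dominance is equivalent to strict tail-dominance: for counting vectors c¹, c² ∈ ℤ_{≥0}^K, the condition (⟨ν, c¹⟩ ≤ ⟨ν, c²⟩ for every strictly increasing positive ν ∈ ℝ^K, and ⟨ν*, c¹⟩ < ⟨ν*, c²⟩ for some strictly increasing positive ν*) holds if and only if (∑_{i=j}^K c¹_i ≤ ∑_{i=j}^K c²_i for all j = 1,...,K and c¹ ≠ c²). -/
/-!
By Abel summation, `∑ i, ν i * c i = ∑ j, (ν j - ν (j - 1)) * ∑ i ∈ Ici j, c i` with `ν (-1) = 0`,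
and `ν` is a numerical representation exactly when all these increments are positive. Ordinal
dominance thus says that the tail differences `∑ i ∈ Ici j, (c₂ i - c₁ i)` pair nonnegatively
with every positive vector of increments, which forces each of them to be nonnegative; conversely,
nonnegative tail differences pair strictly positively as soon as one of them is nonzero, which
happens iff `c₁ ≠ c₂` because the tail sums determine the vector.
-/

open Finset Filter Topology

def IsNumericalRepresentation {ι : Type*} [Preorder ι] (ν : ι → ℝ) : Prop :=
  (∀ i, 0 < ν i) ∧ StrictMono ν

theorem le_of_forall_pos_le_add_mul {x y u : ℝ} (h : ∀ ε > 0, x ≤ y + ε * u) : x ≤ y := by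
  have hlim : Tendsto (fun ε => y + ε * u) (𝓝[>] 0) (𝓝 y) := by
    have hcont : Continuous fun ε : ℝ => y + ε * u := by fun_prop
    simpa using (hcont.tendsto 0).mono_left nhdsWithin_le_nhds
  exact ge_of_tendsto hlim (eventually_nhdsWithin_of_forall h)

section LocallyFinite

variable {ι : Type*} [Preorder ι] [LocallyFiniteOrderBot ι]

theorem sum_sum_Iic_mul_eq_sum_mul_sum_Ici [Fintype ι] [LocallyFiniteOrderTop ι] {R : Type*}
    [NonUnitalNonAssocSemiring R] (δ a : ι → R) :
    ∑ i, (∑ j ∈ Iic i, δ j) * a i = ∑ j, δ j * ∑ i ∈ Ici j, a i := by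
  simp only [sum_mul, mul_sum]
  exact sum_comm' fun i j => by simp [and_comm]

theorem isNumericalRepresentation_sum_Iic {δ : ι → ℝ} (hδ : ∀ j, 0 < δ j) :
    IsNumericalRepresentation fun i => ∑ j ∈ Iic i, δ j :=
  ⟨fun i => sum_pos (fun j _ => hδ j) ⟨i, mem_Iic.2 le_rfl⟩, fun _ _ hlt =>
    sum_lt_sum_of_subset (Iic_subset_Iic.2 hlt.le) (mem_Iic.2 le_rfl)
      (fun h => hlt.not_ge (mem_Iic.1 h)) (hδ _) fun j _ _ => (hδ j).le⟩

theorem sum_Ici_le_of_forall_sum_mul_le [Fintype ι] [LocallyFiniteOrderTop ι] [DecidableEq ι]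
    {a b : ι → ℝ} (h : ∀ ν, IsNumericalRepresentation ν → ∑ i, ν i * a i ≤ ∑ i, ν i * b i)
    (k : ι) : ∑ i ∈ Ici k, a i ≤ ∑ i ∈ Ici k, b i := by
  refine le_of_forall_pos_le_add_mul (u := ∑ j, ∑ i ∈ Ici j, b i - ∑ j, ∑ i ∈ Ici j, a i)
    fun ε hε => ?_
  -- test against the representation whose increments are `ε` everywhere, plus `1` at `k`
  have hδ : ∀ j, 0 < ε + if j = k then 1 else 0 := fun j => by positivity
  have key := h _ (isNumericalRepresentation_sum_Iic hδ)
  beta_reduce at key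
  rw [sum_sum_Iic_mul_eq_sum_mul_sum_Ici, sum_sum_Iic_mul_eq_sum_mul_sum_Ici] at key
  simp only [add_mul, ite_mul, one_mul, zero_mul, sum_add_distrib, ← mul_sum, sum_ite_eq',
    mem_univ, if_true] at key
  linarith

end LocallyFinite

namespace Fin

variable {K : ℕ}

-- `valueBefore ν (j + 1) = ν j`, and the value `0` at `m = 0` plays the role of `ν (-1)`.
def valueBefore (ν : Fin K → ℝ) : ℕ → ℝ
  | 0 => 0
  | m + 1 => if h : m < K then ν ⟨m, h⟩ else 0

def increment (ν : Fin K → ℝ) (j : Fin K) : ℝ :=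
  valueBefore ν (j + 1) - valueBefore ν j

theorem sum_Iic_increment (ν : Fin K → ℝ) (i : Fin K) : ∑ j ∈ Iic i, increment ν j = ν i := by
  have := sum_map (Iic i) valEmbedding fun m => valueBefore ν (m + 1) - valueBefore ν m
  rw [map_valEmbedding_Iic, ← Nat.range_succ_eq_Iic, sum_range_sub] at this
  simpa [valueBefore, increment] using this.symm

theorem increment_pos {ν : Fin K → ℝ} (hν : IsNumericalRepresentation ν) (j : Fin K) :
    0 < increment ν j := by
  obtain ⟨_ | m, hj⟩ := j
  · simpa [increment, valueBefore, hj] using hν.1 _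
  · simpa [increment, valueBefore, hj, Nat.lt_of_succ_lt hj] using
      hν.2 (show (⟨m, _⟩ : Fin K) < ⟨m + 1, hj⟩ from Nat.lt_succ_self m)

theorem sum_mul_eq_sum_increment_mul_sum_Ici (ν a : Fin K → ℝ) :
    ∑ i, ν i * a i = ∑ j, increment ν j * ∑ i ∈ Ici j, a i := by
  simp only [← sum_sum_Iic_mul_eq_sum_mul_sum_Ici, sum_Iic_increment]

theorem eq_of_forall_sum_Ici_eq {a b : Fin K → ℝ}
    (h : ∀ j, ∑ i ∈ Ici j, a i = ∑ i ∈ Ici j, b i) : a = b := by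
  funext k
  set e : Fin K → ℝ := Pi.single k 1
  have key : ∑ i, e i * a i = ∑ i, e i * b i := by
    rw [sum_mul_eq_sum_increment_mul_sum_Ici e a, sum_mul_eq_sum_increment_mul_sum_Ici e b]
    simp only [h]
  simpa [e, Pi.single_apply] using key

theorem sum_mul_lt_of_sum_Ici_le {a b : Fin K → ℝ}
    (hab : ∀ j, ∑ i ∈ Ici j, a i ≤ ∑ i ∈ Ici j, b i) (hne : a ≠ b) {ν : Fin K → ℝ}
    (hν : IsNumericalRepresentation ν) :
    ∑ i, ν i * a i < ∑ i, ν i * b i := by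
  obtain ⟨k, hk⟩ : ∃ k, ∑ i ∈ Ici k, a i < ∑ i ∈ Ici k, b i := by
    by_contra! hba
    exact hne (eq_of_forall_sum_Ici_eq fun j => (hab j).antisymm (hba j))
  rw [sum_mul_eq_sum_increment_mul_sum_Ici ν a, sum_mul_eq_sum_increment_mul_sum_Ici ν b]
  exact sum_lt_sum (fun j _ => mul_le_mul_of_nonneg_left (hab j) (increment_pos hν j).le)
    ⟨k, mem_univ k, mul_lt_mul_of_pos_left hk (increment_pos hν k)⟩

end Fin

/-- Ordinal dominance is equivalent to strict tail-dominance. -/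
theorem ordinal_dominance_iff_strict_tail (K : ℕ) (c₁ c₂ : Fin K → ℕ) :
    ((∀ ν : Fin K → ℝ, (∀ i, 0 < ν i) → StrictMono ν →
        ∑ i, ν i * (c₁ i : ℝ) ≤ ∑ i, ν i * (c₂ i : ℝ)) ∧
      (∃ ν : Fin K → ℝ, (∀ i, 0 < ν i) ∧ StrictMono ν ∧
        ∑ i, ν i * (c₁ i : ℝ) < ∑ i, ν i * (c₂ i : ℝ))) ↔
      ((∀ j : Fin K, ∑ i ∈ Finset.Ici j, c₁ i ≤ ∑ i ∈ Finset.Ici j, c₂ i) ∧ c₁ ≠ c₂) := by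
  have htail_cast : ∀ j : Fin K, ∑ i ∈ Ici j, c₁ i ≤ ∑ i ∈ Ici j, c₂ i ↔
      ∑ i ∈ Ici j, (c₁ i : ℝ) ≤ ∑ i ∈ Ici j, (c₂ i : ℝ) := fun j => by
    exact_mod_cast Iff.rfl
  simp only [htail_cast]
  constructor
  · rintro ⟨hle, ν, -, -, hlt⟩
    refine ⟨sum_Ici_le_of_forall_sum_mul_le fun ν hν => hle ν hν.1 hν.2, ?_⟩
    rintro rfl
    exact hlt.false
  · rintro ⟨htail, hne⟩
    have hne_cast : (fun i => (c₁ i : ℝ)) ≠ fun i => (c₂ i : ℝ) :=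
      (Nat.cast_injective.comp_left).ne hne
    have hlt := fun ν (hν : IsNumericalRepresentation ν) =>
      Fin.sum_mul_lt_of_sum_Ici_le htail hne_cast hν
    have hone := isNumericalRepresentation_sum_Iic (ι := Fin K) fun _ => one_pos
    exact ⟨fun ν hpos hmono => (hlt ν ⟨hpos, hmono⟩).le, _, hone.1, hone.2, hlt _ hone⟩
end

section
/- Non-dominance mapping (equality under full rank): let Y ⊆ ℝ^K be nonempty and A ∈ ℝ^{m×K} with rank K (injective as a linear map). Then ȳ ∈ Y has no y ∈ Y with ȳ − y ∈ {d : A·d ≥ 0} \ {0} if and only if A·ȳ is Pareto non-dominated in A·Y. -/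
/-- Non-dominance mapping (equality under full rank): for an injective matrix A,
a point is cone-non-dominated iff its image is Pareto non-dominated. -/
theorem cone_nondominated_iff_pareto_of_fullRank (K m : ℕ)
    (Y : Set (Fin K → ℝ)) (hY : Y.Nonempty)
    (A : Matrix (Fin m) (Fin K) ℝ)
    (hrank : ∀ d : Fin K → ℝ, A.mulVec d = 0 → d = 0)
    (ybar : Fin K → ℝ) (hybar : ybar ∈ Y) :
    (¬ ∃ y ∈ Y, (∀ i, 0 ≤ A.mulVec (ybar - y) i) ∧ ybar - y ≠ 0) ↔
      (¬ ∃ z ∈ (fun y => A.mulVec y) '' Y,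
        (∀ i, z i ≤ A.mulVec ybar i) ∧ z ≠ A.mulVec ybar) := by
  apply not_congr
  constructor
  · rintro ⟨y, hy, hpos, hne⟩
    refine ⟨A.mulVec y, ⟨y, hy, rfl⟩, fun i => ?_, fun h => ?_⟩
    · have := hpos i
      rw [Matrix.mulVec_sub] at this
      simpa [sub_nonneg] using this
    · exact hne (hrank _ (by rw [Matrix.mulVec_sub, h, sub_self]))
  · rintro ⟨z, ⟨y, hy, rfl⟩, hle, hne⟩
    refine ⟨y, hy, fun i => ?_, fun h => hne ?_⟩
    · rw [Matrix.mulVec_sub]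
      simpa [sub_nonneg] using hle i
    · rw [sub_eq_zero.mp h]
end

section
/- In the instance with K = 2 and counting vectors c¹ = (3,1), c² = (5,0), c³ = (0,2), there exists no strictly increasing positive vector ν ∈ ℝ² (0 < ν_1 < ν_2) with both ⟨ν, c¹⟩ ≤ ⟨ν, c²⟩ and ⟨ν, c¹⟩ ≤ ⟨ν, c³⟩; yet neither c² nor c³ ordinally dominates c¹, i.e., it is neither the case that ⟨ν, c²⟩ ≤ ⟨ν, c¹⟩ for all such ν, nor the case that ⟨ν, c³⟩ ≤ ⟨ν, c¹⟩ for all such ν. -/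
/-- Non-supported efficient solutions exist: for c¹ = (3,1), c² = (5,0), c³ = (0,2)
no numerical representation makes c¹ simultaneously at least as good as both c² and c³,
yet neither c² nor c³ ordinally dominates c¹. -/
theorem nonsupported_efficient_solution :
    (¬ ∃ ν₁ ν₂ : ℝ, 0 < ν₁ ∧ ν₁ < ν₂ ∧
        3 * ν₁ + ν₂ ≤ 5 * ν₁ ∧ 3 * ν₁ + ν₂ ≤ 2 * ν₂) ∧
    (¬ ∀ ν₁ ν₂ : ℝ, 0 < ν₁ → ν₁ < ν₂ → 5 * ν₁ ≤ 3 * ν₁ + ν₂) ∧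
    (¬ ∀ ν₁ ν₂ : ℝ, 0 < ν₁ → ν₁ < ν₂ → 2 * ν₂ ≤ 3 * ν₁ + ν₂) := by
  refine ⟨?_, ?_, ?_⟩
  · rintro ⟨ν₁, ν₂, h₁, _, h₃, h₄⟩; linarith
  · intro h; have := h 1 (3/2) one_pos (by norm_num); linarith
  · intro h; have := h 1 4 one_pos (by norm_num); linarith
end
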